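/- Let m be a strictly positive integer and let u, v ∈ {0,1}^m be binary vectors with equal Hamming weight |u| = |v| = l, and write supp(u) = {s_1 < s_2 < ⋯ < s_l} and supp(v) = {t_1 < t_2 < ⋯ < t_l}. If s_i ≤ t_i for all 1 ≤ i ≤ l (i.e., u ≼_H v), then Rel(C^u; p) ≤ Rel(C^v; p) for all p ∈ [0,1]. -/

import Mathlib

/-- Reliability of the elementary networks: `g false p = p²` (series),
`g true p = 1 - (1-p)²` (parallel). -/
def g (b : Bool) (p : ℝ) : ℝ := if b then 1 - (1 - p)^2 else p^2

/-- Reliability polynomial of the composition `C^u`,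
`Rel(C^u;p) = (g_{u_1} ∘ ⋯ ∘ g_{u_m})(p)`. -/
def RelC (m : ℕ) (u : Fin m → Bool) (p : ℝ) : ℝ :=
  (List.finRange m).foldr (fun i q => g (u i) q) p

/-- Support of a binary vector. -/
def supp (m : ℕ) (u : Fin m → Bool) : Finset (Fin m) :=
  Finset.univ.filter (fun i => u i = true)

/-- Rank function `ρ(u) = ∑_{i ∈ supp u} i`, with 1-based index values. -/
def rho (m : ℕ) (u : Fin m → Bool) : ℕ :=
  ∑ i ∈ supp m u, ((i : ℕ) + 1)

/-- The support of `u`, sorted increasingly. -/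
def sortedSupp (m : ℕ) (u : Fin m → Bool) : List (Fin m) :=
  Finset.sort (supp m u) (· ≤ ·)

/-- The order `≼_H`: same Hamming weight and `s_i ≤ t_i` for every `i`. -/
def relH (m : ℕ) (u v : Fin m → Bool) : Prop :=
  (supp m u).card = (supp m v).card ∧
    ∀ (i : ℕ) (hu : i < (sortedSupp m u).length) (hv : i < (sortedSupp m v).length),
      (sortedSupp m u).get ⟨i, hu⟩ ≤ (sortedSupp m v).get ⟨i, hv⟩

/-- The order `≼_SH`. -/
def relSH (m : ℕ) (u v : Fin m → Bool) : Prop :=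
  ((supp m u).card ≠ (supp m v).card ∧ supp m u ⊆ supp m v) ∨ relH m u v

/-- The partial order generated by `≼_SH` (reflexive–transitive closure). -/
def leSH (m : ℕ) (u v : Fin m → Bool) : Prop :=
  Relation.ReflTransGen (relSH m) u v

/-!
The series map `g false` and the parallel map `g true` are monotone on `[0, 1]` and satisfy
`g true ∘ g false ≤ g false ∘ g true`, so letting a `false` overtake a block of `true`s never
decreases reliability. Read `u ≼_H v` through prefix counts: every prefix of `v` contains at most
as many `true`s as the prefix of `u` of the same length. Induct on the length: if the first letters
agree, pass to the tails; otherwise `u = 1 1ᶠ 0 r` and `v = 0 w`, the `0` of `u` overtakes the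
ones in front of it to give `0 1ᶠ⁺¹ r`, and `1ᶠ⁺¹ r` still has its `true`s to the left of
those of `w`.
-/

open Set

lemma mapsTo_g (b : Bool) : MapsTo (g b) (Icc 0 1) (Icc 0 1) := by
  rintro p ⟨h0, h1⟩
  cases b <;> simp only [g, Bool.false_eq_true, if_true, if_false, mem_Icc] <;>
    constructor <;> nlinarith

lemma monotoneOn_g (b : Bool) : MonotoneOn (g b) (Icc 0 1) := by
  rintro p ⟨hp0, -⟩ q ⟨-, hq1⟩ hpq
  cases b <;> simp only [g, Bool.false_eq_true, if_true, if_false] <;> nlinarith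

lemma g_true_g_false_le (x : ℝ) : g true (g false x) ≤ g false (g true x) := by
  have h : g false (g true x) - g true (g false x) = 2 * (x * (1 - x)) ^ 2 := by
    simp only [g, Bool.false_eq_true, if_true, if_false]
    ring
  linarith [sq_nonneg (x * (1 - x))]

def listRel (l : List Bool) (p : ℝ) : ℝ := l.foldr g p

lemma listRel_mem_Icc (l : List Bool) {p : ℝ} (hp : p ∈ Icc (0 : ℝ) 1) :
    listRel l p ∈ Icc (0 : ℝ) 1 := by
  induction l with
  | nil => exact hp
  | cons b l ih => exact mapsTo_g b ih

lemma listRel_replicate_true_append_false_le (n : ℕ) (r : List Bool) {p : ℝ}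
    (hp : p ∈ Icc (0 : ℝ) 1) :
    listRel (List.replicate n true ++ false :: r) p ≤
      listRel (false :: (List.replicate n true ++ r)) p := by
  induction n with
  | zero => rfl
  | succ n ih =>
    have hx := listRel_mem_Icc (List.replicate n true ++ r) hp
    calc listRel (List.replicate (n + 1) true ++ false :: r) p
        = g true (listRel (List.replicate n true ++ false :: r) p) := rfl
      _ ≤ g true (g false (listRel (List.replicate n true ++ r) p)) :=
          monotoneOn_g true (listRel_mem_Icc _ hp) (mapsTo_g false hx) ih
      _ ≤ g false (g true (listRel (List.replicate n true ++ r) p)) := g_true_g_false_le _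
      _ = listRel (false :: (List.replicate (n + 1) true ++ r)) p := rfl

def MovesTruesRight (l₁ l₂ : List Bool) : Prop :=
  l₁.length = l₂.length ∧ l₁.count true = l₂.count true ∧
    ∀ k, (l₂.take k).count true ≤ (l₁.take k).count true

namespace MovesTruesRight

variable {l₁ l₂ : List Bool}

lemma of_cons {b : Bool} (h : MovesTruesRight (b :: l₁) (b :: l₂)) : MovesTruesRight l₁ l₂ := by
  obtain ⟨hlen, htot, hpre⟩ := h
  refine ⟨by simpa using hlen, by simpa [List.count_cons] using htot, fun k => ?_⟩
  simpa [List.count_cons] using hpre (k + 1)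

lemma not_false_true (h : MovesTruesRight (false :: l₁) (true :: l₂)) : False := by
  simpa using h.2.2 1

lemma exists_eq_replicate_append_false_cons (h : MovesTruesRight (true :: l₁) (false :: l₂)) :
    ∃ f r, l₁ = List.replicate f true ++ false :: r ∧
      MovesTruesRight (List.replicate (f + 1) true ++ r) l₂ := by
  obtain ⟨hlen, htot, hpre⟩ := h
  simp only [List.length_cons, Nat.add_right_cancel_iff, List.count_cons_self,
    List.count_cons_of_ne Bool.false_ne_true] at hlen htot
  have hfalse : false ∈ l₁ := by
    by_contra hf
    have : l₁.count true = l₁.length :=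
      List.count_eq_length.2 fun b hb => by cases b <;> simp_all
    have := List.count_le_length (a := true) (l := l₂)
    omega
  obtain ⟨s, r, rfl, hs⟩ := List.eq_append_cons_of_mem hfalse
  have hs' : s = List.replicate s.length true :=
    List.eq_replicate_iff.2 ⟨rfl, fun b hb => by cases b <;> simp_all⟩
  generalize s.length = f at hs'
  subst hs'
  refine ⟨f, r, rfl, ?_, ?_, fun k => ?_⟩
  · simp only [List.length_append, List.length_replicate, List.length_cons] at hlen ⊢
    omega
  · simp only [List.count_append, List.count_replicate_self,
      List.count_cons_of_ne Bool.false_ne_true] at htot ⊢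
    omega
  have hk := hpre (k + 1)
  simp only [List.take_succ_cons, List.count_cons_self,
    List.count_cons_of_ne Bool.false_ne_true] at hk
  rcases le_or_gt k f with hkf | hkf
  · rw [List.take_append_of_le_length (by simp only [List.length_replicate]; omega),
      List.take_replicate, List.count_replicate_self]
    have := (List.count_le_length (a := true) (l := l₂.take k)).trans (List.length_take_le k l₂)
    omega
  · obtain ⟨j, rfl⟩ : ∃ j, k = f + 1 + j := ⟨k - (f + 1), by omega⟩
    have hj : f + 1 + j - f = j + 1 := by omega
    simp only [List.take_append, List.take_replicate, List.length_replicate, hj,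
      Nat.add_sub_cancel_left, List.take_succ_cons, List.count_append, List.count_replicate_self,
      List.count_cons_of_ne Bool.false_ne_true] at hk ⊢
    omega

end MovesTruesRight

theorem listRel_le_of_movesTruesRight {l₁ l₂ : List Bool} (h : MovesTruesRight l₁ l₂) {p : ℝ}
    (hp : p ∈ Icc (0 : ℝ) 1) : listRel l₁ p ≤ listRel l₂ p := by
  induction hn : l₁.length generalizing l₁ l₂ with
  | zero =>
    obtain rfl := List.eq_nil_of_length_eq_zero hn
    obtain rfl := List.eq_nil_of_length_eq_zero (h.1.symm.trans hn)
    rfl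
  | succ n ih =>
    obtain ⟨b₁, t₁, rfl⟩ := List.exists_cons_of_length_eq_add_one hn
    obtain ⟨b₂, t₂, rfl⟩ := List.exists_cons_of_length_eq_add_one (h.1.symm.trans hn)
    by_cases hb : b₁ = b₂
    · subst hb
      exact monotoneOn_g b₁ (listRel_mem_Icc t₁ hp) (listRel_mem_Icc t₂ hp)
        (ih h.of_cons (by simpa using hn))
    obtain ⟨rfl, rfl⟩ | ⟨rfl, rfl⟩ : b₁ = false ∧ b₂ = true ∨ b₁ = true ∧ b₂ = false := by
      cases b₁ <;> cases b₂ <;> simp_all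
    · exact h.not_false_true.elim
    · obtain ⟨f, r, rfl, h'⟩ := h.exists_eq_replicate_append_false_cons
      calc listRel (true :: (List.replicate f true ++ false :: r)) p
          = listRel (List.replicate (f + 1) true ++ false :: r) p := rfl
        _ ≤ listRel (false :: (List.replicate (f + 1) true ++ r)) p :=
          listRel_replicate_true_append_false_le _ _ hp
        _ ≤ listRel (false :: t₂) p :=
          monotoneOn_g false (listRel_mem_Icc _ hp) (listRel_mem_Icc _ hp)
            (ih h' (by
              simp only [List.length_cons, List.length_append, List.length_replicate] at hn ⊢
              omega))

lemma List.take_finRange (m k : ℕ) :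
    (List.finRange m).take k = (List.finRange m).filter (fun i : Fin m => (i : ℕ) < k) := by
  refine ((List.sortedLT_finRange m).pairwise.sublist (List.take_sublist _ _)).sortedLT
    |>.eq_of_mem_iff ((List.sortedLT_finRange m).pairwise.filter _).sortedLT fun i => ?_
  simp only [List.mem_filter, List.mem_finRange, true_and, decide_eq_true_eq,
    List.mem_take_iff_getElem, List.getElem_finRange, List.length_finRange]
  constructor
  · rintro ⟨j, hj, rfl⟩
    exact (lt_min_iff.1 hj).1
  · exact fun hi => ⟨i, lt_min hi i.2, rfl⟩

lemma List.Forall₂.countP_le_countP {α β : Type*} {R : α → β → Prop} {P : α → Bool}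
    {Q : β → Bool} (hPQ : ∀ a b, R a b → Q b → P a) {l₁ : List α} {l₂ : List β}
    (h : List.Forall₂ R l₁ l₂) : l₂.countP Q ≤ l₁.countP P := by
  induction h with
  | nil => rfl
  | @cons a b _ _ hab _ ih =>
    simp only [List.countP_cons]
    by_cases hb : Q b
    · simp [hb, hPQ a b hab hb, ih]
    · simp only [hb, Bool.false_eq_true, if_false]
      omega

lemma relC_eq_listRel (m : ℕ) (u : Fin m → Bool) (p : ℝ) :
    RelC m u p = listRel (List.ofFn u) p := by
  rw [RelC, listRel, List.ofFn_eq_map, List.foldr_map]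

lemma sortedSupp_eq_filter (m : ℕ) (u : Fin m → Bool) :
    sortedSupp m u = (List.finRange m).filter (fun i => u i) :=
  (Finset.sortedLT_sort _).eq_of_mem_iff ((List.sortedLT_finRange m).pairwise.filter _).sortedLT
    (by simp [supp])

lemma count_true_take_ofFn (m : ℕ) (u : Fin m → Bool) (k : ℕ) :
    ((List.ofFn u).take k).count true =
      (sortedSupp m u).countP (fun i : Fin m => (i : ℕ) < k) := by
  rw [sortedSupp_eq_filter, List.countP_filter, List.ofFn_eq_map, ← List.map_take,
    List.take_finRange, List.count, List.countP_map, List.countP_filter]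
  exact List.countP_congr fun i _ => by simp [Bool.and_comm]

lemma count_true_ofFn (m : ℕ) (u : Fin m → Bool) :
    (List.ofFn u).count true = (supp m u).card := by
  have h := count_true_take_ofFn m u m
  rw [List.take_of_length_le (by simp), List.countP_eq_length.2 (fun i _ => by simp)] at h
  simpa [sortedSupp] using h

lemma relH.movesTruesRight {m : ℕ} {u v : Fin m → Bool} (h : relH m u v) :
    MovesTruesRight (List.ofFn u) (List.ofFn v) := by
  obtain ⟨hcard, hcoord⟩ := h
  have hsorted : List.Forall₂ (· ≤ ·) (sortedSupp m u) (sortedSupp m v) :=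
    List.forall₂_iff_get.2 ⟨by simp [sortedSupp, hcard], hcoord⟩
  refine ⟨by simp, by rw [count_true_ofFn, count_true_ofFn, hcard], fun k => ?_⟩
  rw [count_true_take_ofFn, count_true_take_ofFn]
  exact hsorted.countP_le_countP fun a b hab hb => by
    simpa using lt_of_le_of_lt (Fin.le_iff_val_le_val.1 hab) (by simpa using hb)

theorem rel_le_of_relH_general (m : ℕ) (u v : Fin m → Bool)
    (hcard : (supp m u).card = (supp m v).card)
    (hcoord : ∀ (i : ℕ) (hu : i < (sortedSupp m u).length)
        (hv : i < (sortedSupp m v).length),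
        (sortedSupp m u).get ⟨i, hu⟩ ≤ (sortedSupp m v).get ⟨i, hv⟩) :
    ∀ p ∈ Set.Icc (0:ℝ) 1, RelC m u p ≤ RelC m v p := by
  intro p hp
  rw [relC_eq_listRel, relC_eq_listRel]
  exact listRel_le_of_movesTruesRight (relH.movesTruesRight ⟨hcard, hcoord⟩) hp

/-- if `u ≼_H v` (equal Hamming weight and the `i`-th smallest
element of `supp u` is at most the `i`-th smallest element of `supp v`, for all `i`),
then `Rel(C^u;p) ≤ Rel(C^v;p)` on `[0,1]`. -/
theorem rel_le_of_relH (m : ℕ) (hm : 0 < m) (u v : Fin m → Bool)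
    (hcard : (supp m u).card = (supp m v).card)
    (hcoord : ∀ (i : ℕ) (hu : i < (sortedSupp m u).length)
        (hv : i < (sortedSupp m v).length),
        (sortedSupp m u).get ⟨i, hu⟩ ≤ (sortedSupp m v).get ⟨i, hv⟩) :
    ∀ p ∈ Set.Icc (0:ℝ) 1, RelC m u p ≤ RelC m v p :=
  rel_le_of_relH_general m u v hcard hcoord
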